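/- Under the assumptions of the GMD discretization-error bound (E_i ≤ c(ε_H/L)Σ_{j=0}^{i-2} a_j D_{ψ*}(z_{i-1}, z_j) - (1-c)A_{i-1}D_{ψ*}(z_{i-1}, z_i)), with ψ(x) = (μ/2)‖x‖² in a Euclidean space, (a_i/A_i)² = cμ/(LH_i), B_{k-1} = A_{k-1}H_k, and if (1-c')(1/B_{i-1} - 1/B_i) ≥ (cε_H/L)(1/B_i - 1/B_k) for all i ≤ k with c' ∈ [0,1], then c'Σ_{i=1}^k (1/B_{i-1} - 1/B_i)Σ_{j=0}^{i-1} a_j D_{ψ*}(z_i, z_j) + (c(1-c)/(2L))Σ_{i=1}^k (1 - B_{i-1}/B_k)‖∇f(x_i)‖² ≤ f(x_0) - f(x*). -/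

import Mathlib

/-!
With `M n = Σ_{j<n} a_j D_{ψ*}(z_n, z_j)`, every step of GMD satisfies
`f(y_{m+1}) + c(1-c)/(2L) ‖∇f(x_{m+1})‖² + M_{m+1}/B_m ≤ f(y_m) + (1 + cε_H/L) M_m/B_m`.
Indeed `y_{m+1} = x_{m+1} - (c/L)∇f(x_{m+1})`, so L-smoothness gives descent from `x_{m+1}`, and
weak convexity compares `f(x_{m+1})` with `f(y_m)`. The correction `x_{m+1} - y_m` is a multiple of
`Σ_{j≤m} a_j (z_m - z_j)`, so polarization turns `⟪∇f(x_{m+1}), x_{m+1} - y_m⟫` into the memory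
difference `(M_m - M_{m+1})/B_m` and Cauchy–Schwarz bounds `‖x_{m+1} - y_m‖²` by a multiple of `M_m`.
Multiplying the `m`-th inequality by `1 - B_m/B_k ≥ 0` and summing, the memory terms telescope and
the hypothesis on `c'` absorbs the weak-convexity error.
-/

open Finset
open scoped RealInnerProductSpace

theorem le_add_inner_add_of_lipschitz_gradient {E : Type*} [NormedAddCommGroup E]
    [InnerProductSpace ℝ E] [CompleteSpace E] {f : E → ℝ} {g : E → E} {L : ℝ}
    (hf : ∀ p, HasGradientAt f (g p) p) (hg : ∀ p q, ‖g p - g q‖ ≤ L * ‖p - q‖) (p q : E) :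
    f q ≤ f p + ⟪g p, q - p⟫ + L / 2 * ‖q - p‖ ^ 2 := by
  set v := q - p
  let φ : ℝ → ℝ := fun t => f (p + t • v) - t * ⟪g p, v⟫ - L / 2 * t ^ 2 * ‖v‖ ^ 2
  have hφ : ∀ t, HasDerivAt φ (⟪g (p + t • v) - g p, v⟫ - L * t * ‖v‖ ^ 2) t := by
    intro t
    have hline : HasDerivAt (fun s : ℝ => p + s • v) v t := by
      simpa using ((hasDerivAt_id t).smul_const v).const_add p
    refine ((((hf _).hasFDerivAt.comp_hasDerivAt t hline).sub
      ((hasDerivAt_id t).mul_const ⟪g p, v⟫)).sub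
      (((hasDerivAt_pow 2 t).const_mul (L / 2)).mul_const (‖v‖ ^ 2))).congr_deriv ?_
    simp only [InnerProductSpace.toDual_apply_apply, inner_sub_left]
    push_cast
    ring
  have hanti : AntitoneOn φ (Set.Icc 0 1) := by
    refine antitoneOn_of_deriv_nonpos (convex_Icc 0 1)
      (fun t _ => (hφ t).continuousAt.continuousWithinAt)
      (fun t _ => (hφ t).differentiableAt.differentiableWithinAt) fun t ht => ?_
    rw [interior_Icc] at ht
    rw [(hφ t).deriv, sub_nonpos]
    calc ⟪g (p + t • v) - g p, v⟫ ≤ ‖g (p + t • v) - g p‖ * ‖v‖ := real_inner_le_norm _ _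
      _ ≤ L * ‖t • v‖ * ‖v‖ := by gcongr; simpa using hg (p + t • v) p
      _ = L * t * ‖v‖ ^ 2 := by rw [norm_smul, Real.norm_of_nonneg ht.1.le]; ring
  have h01 := hanti (by simp) (by simp) zero_le_one
  simp only [φ, v, zero_smul, add_zero, one_smul, add_sub_cancel] at h01
  linarith

theorem norm_sum_smul_sq_le {ι E : Type*} [SeminormedAddCommGroup E] [NormedSpace ℝ E]
    (s : Finset ι) {a : ι → ℝ} (u : ι → E) (ha : ∀ j ∈ s, 0 ≤ a j) :
    ‖∑ j ∈ s, a j • u j‖ ^ 2 ≤ (∑ j ∈ s, a j) * ∑ j ∈ s, a j * ‖u j‖ ^ 2 := by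
  calc ‖∑ j ∈ s, a j • u j‖ ^ 2 ≤ (∑ j ∈ s, a j * ‖u j‖) ^ 2 := by
        gcongr
        refine (norm_sum_le _ _).trans_eq (sum_congr rfl fun j hj => ?_)
        rw [norm_smul, Real.norm_of_nonneg (ha j hj)]
    _ ≤ _ := sum_sq_le_sum_mul_sum_of_sq_le_mul s ha
        (fun j hj => mul_nonneg (ha j hj) (sq_nonneg _)) fun j _ => le_of_eq (by ring)

theorem two_mul_sum_mul_inner_sub_sub {ι E : Type*} [NormedAddCommGroup E] [InnerProductSpace ℝ E]
    (s : Finset ι) (a : ι → ℝ) (u v : E) (w : ι → E) :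
    2 * ∑ j ∈ s, a j * ⟪u - v, u - w j⟫
      = (∑ j ∈ s, a j) * ‖u - v‖ ^ 2 + ∑ j ∈ s, a j * ‖u - w j‖ ^ 2
        - ∑ j ∈ s, a j * ‖v - w j‖ ^ 2 := by
  have h j : 2 * ⟪u - v, u - w j⟫ = ‖u - v‖ ^ 2 + ‖u - w j‖ ^ 2 - ‖v - w j‖ ^ 2 := by
    have h := norm_sub_sq_real (u - v) (u - w j)
    rw [sub_sub_sub_cancel_left, norm_sub_rev] at h
    linarith
  rw [mul_sum, sum_mul, ← sum_add_distrib, ← sum_sub_distrib]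
  exact sum_congr rfl fun j _ => by linear_combination a j * h j

/-- The sum of the first `n` instances of `hstep`, the `m`-th one weighted by `1 - B_m/B_k`. -/
theorem weighted_telescoping_partial {F G M B : ℕ → ℝ} {δ c' : ℝ} {k : ℕ}
    (hF : ∀ n, 0 ≤ F n) (hM0 : M 0 = 0) (hB : ∀ n, 0 < B n) (hBmono : Monotone B)
    (hstep : ∀ m < k, F (m + 1) + G (m + 1) + M (m + 1) / B m ≤ F m + (1 + δ) * (M m / B m))
    (hcoef : ∀ n ≤ k, δ * (1 / B n - 1 / B k) * M n
      ≤ (1 - c') * (1 / B (n - 1) - 1 / B n) * M n) {n : ℕ} (hn : n ≤ k) :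
    c' * ∑ i ∈ Icc 1 n, (1 / B (i - 1) - 1 / B i) * M i
        + ∑ i ∈ Icc 1 n, (1 - B (i - 1) / B k) * G i
        + (1 - B (n - 1) / B k) * F n
        + ((1 / B n - 1 / B k) + (1 - c') * (1 / B (n - 1) - 1 / B n)) * M n
      ≤ (1 - B 0 / B k) * F 0 := by
  induction n with
  | zero => simp [hM0]
  | succ n ih =>
    rw [sum_Icc_succ_top (by omega), sum_Icc_succ_top (by omega), Nat.add_sub_cancel]
    have hw : 0 ≤ 1 - B n / B k := by
      rw [sub_nonneg, div_le_one (hB k)]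
      exact hBmono (by omega)
    have hFw : (1 - B n / B k) * F n ≤ (1 - B (n - 1) / B k) * F n := by
      gcongr
      · exact hF n
      · exact (hB k).le
      · exact hBmono (Nat.sub_le n 1)
    have hdiv : ∀ X, (1 - B n / B k) * (X / B n) = (1 / B n - 1 / B k) * X := fun X => by
      field_simp [(hB n).ne', (hB k).ne']
    have hstep_w := mul_le_mul_of_nonneg_left (hstep n (by omega)) hw
    rw [mul_add, mul_add, mul_add, mul_left_comm _ (1 + δ), hdiv, hdiv] at hstep_w
    linarith [ih (by omega), hcoef n (by omega)]

theorem weighted_telescoping {F G M B : ℕ → ℝ} {δ c' : ℝ} {k : ℕ}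
    (hF : ∀ n, 0 ≤ F n) (hM : ∀ n, 0 ≤ M n) (hM0 : M 0 = 0)
    (hB : ∀ n, 0 < B n) (hBmono : Monotone B)
    (hstep : ∀ m < k, F (m + 1) + G (m + 1) + M (m + 1) / B m ≤ F m + (1 + δ) * (M m / B m))
    (hcond : ∀ i, 1 ≤ i → i ≤ k →
      (1 - c') * (1 / B (i - 1) - 1 / B i) ≥ δ * (1 / B i - 1 / B k)) :
    c' * ∑ i ∈ Icc 1 k, (1 / B (i - 1) - 1 / B i) * M i
      + ∑ i ∈ Icc 1 k, (1 - B (i - 1) / B k) * G i ≤ F 0 := by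
  have hcoef : ∀ n ≤ k, δ * (1 / B n - 1 / B k) * M n
      ≤ (1 - c') * (1 / B (n - 1) - 1 / B n) * M n := by
    intro n hn
    rcases Nat.eq_zero_or_pos n with rfl | hn0
    · simp [hM0]
    · exact mul_le_mul_of_nonneg_right (hcond n hn0 hn) (hM n)
  have hFk : 0 ≤ (1 - B (k - 1) / B k) * F k := by
    refine mul_nonneg ?_ (hF k)
    rw [sub_nonneg, div_le_one (hB k)]
    exact hBmono (Nat.sub_le k 1)
  have hF0 : (1 - B 0 / B k) * F 0 ≤ F 0 :=
    mul_le_of_le_one_left (hF 0) (sub_le_self _ (div_pos (hB 0) (hB k)).le)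
  linarith [weighted_telescoping_partial hF hM0 hB hBmono hstep hcoef le_rfl, hcoef k le_rfl]

section Memory
variable {E : Type*} [SeminormedAddCommGroup E]

/-- `Σ_{j<n} a_j D_{ψ*}(z_n, z_j)` for `ψ = (μ/2)‖·‖²`. -/
noncomputable def gmdMemory (μ : ℝ) (a : ℕ → ℝ) (z : ℕ → E) (n : ℕ) : ℝ :=
  ∑ j ∈ range n, a j * (‖z n - z j‖ ^ 2 / (2 * μ))

variable {μ : ℝ} {a : ℕ → ℝ} {z : ℕ → E}

theorem gmdMemory_zero : gmdMemory μ a z 0 = 0 := by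
  simp [gmdMemory]

theorem gmdMemory_nonneg (hμ : 0 < μ) (ha : ∀ j, 0 ≤ a j) (n : ℕ) : 0 ≤ gmdMemory μ a z n :=
  sum_nonneg fun j _ => mul_nonneg (ha j) (by positivity)

theorem sum_mul_norm_sub_sq_eq_gmdMemory (hμ : μ ≠ 0) (n : ℕ) :
    ∑ j ∈ range n, a j * ‖z n - z j‖ ^ 2 = 2 * μ * gmdMemory μ a z n := by
  rw [gmdMemory, mul_sum]
  exact sum_congr rfl fun j _ => by field_simp

theorem sum_range_succ_mul_norm_sub_sq_eq_gmdMemory (hμ : μ ≠ 0) (n : ℕ) :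
    ∑ j ∈ range (n + 1), a j * ‖z n - z j‖ ^ 2 = 2 * μ * gmdMemory μ a z n := by
  rw [sum_range_succ, sub_self, norm_zero, zero_pow two_ne_zero, mul_zero, add_zero,
    sum_mul_norm_sub_sq_eq_gmdMemory hμ]

end Memory

section Iteration
variable {E : Type*} [AddCommGroup E] [Module ℝ E]

structure IsGMD (μ : ℝ) (a A H : ℕ → ℝ) (g : E → E) (x y z : ℕ → E) : Prop where
  A_eq_sum : ∀ i, A i = ∑ j ∈ range (i + 1), a j
  A_pos : ∀ i, 0 < A i
  y_zero : y 0 = μ⁻¹ • z 0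
  x_eq : ∀ i ≥ 1, x i = (A (i - 1) / A i) • y (i - 1) + (a i / A i) • (μ⁻¹ • z (i - 1))
  z_eq : ∀ i ≥ 1, z i = z (i - 1) - ((a i / A i) * H i) • g (x i)
  y_eq : ∀ i ≥ 1, y i = x i + ((a i / A i) * μ⁻¹) • (z i - z (i - 1))

namespace IsGMD
variable {μ : ℝ} {a A H : ℕ → ℝ} {g : E → E} {x y z : ℕ → E}

theorem A_succ (h : IsGMD μ a A H g x y z) (m : ℕ) : A (m + 1) = A m + a (m + 1) := by
  rw [h.A_eq_sum, h.A_eq_sum, sum_range_succ]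

theorem smul_y_eq (h : IsGMD μ a A H g x y z) (n : ℕ) :
    A n • y n = μ⁻¹ • ∑ j ∈ range (n + 1), a j • z j := by
  induction n with
  | zero => rw [h.A_eq_sum, sum_range_one, sum_range_one, h.y_zero, smul_comm]
  | succ n ih =>
    have hy := h.y_eq (n + 1) (by omega)
    have hx := h.x_eq (n + 1) (by omega)
    simp only [Nat.add_sub_cancel] at hy hx
    have hA := (h.A_pos (n + 1)).ne'
    rw [sum_range_succ, smul_add, ← ih, hy, hx, h.A_succ]
    rw [h.A_succ] at hA
    match_scalars <;> field_simp
    ring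

theorem x_succ_sub_y (h : IsGMD μ a A H g x y z) (hμ : μ ≠ 0) (m : ℕ) :
    x (m + 1) - y m
      = (a (m + 1) / A (m + 1) / (μ * A m)) • ∑ j ∈ range (m + 1), a j • (z m - z j) := by
  have hx := h.x_eq (m + 1) (by omega)
  simp only [Nat.add_sub_cancel] at hx
  have hAy : ∑ j ∈ range (m + 1), a j • z j = (μ * A m) • y m := by
    rw [mul_smul, h.smul_y_eq, smul_inv_smul₀ hμ]
  have hA := (h.A_pos m).ne'
  have hA' := (h.A_pos (m + 1)).ne'
  simp only [smul_sub, sum_sub_distrib, ← sum_smul, ← h.A_eq_sum, hAy, hx]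
  rw [h.A_succ] at hA' ⊢
  match_scalars <;> field_simp
  ring

theorem z_sub_z_succ (h : IsGMD μ a A H g x y z) (m : ℕ) :
    z m - z (m + 1) = (a (m + 1) / A (m + 1) * H (m + 1)) • g (x (m + 1)) := by
  rw [h.z_eq (m + 1) (by omega), Nat.add_sub_cancel, sub_sub_cancel]

theorem y_succ_eq (h : IsGMD μ a A H g x y z) {κ : ℝ} {m : ℕ}
    (hκ : (a (m + 1) / A (m + 1)) ^ 2 * H (m + 1) / μ = κ) :
    y (m + 1) = x (m + 1) - κ • g (x (m + 1)) := by
  rw [h.y_eq (m + 1) (by omega), Nat.add_sub_cancel, ← neg_sub, h.z_sub_z_succ, smul_neg,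
    smul_smul, sub_eq_add_neg, ← hκ]
  congr 3
  ring

end IsGMD

end Iteration

namespace IsGMD
variable {E : Type*} [NormedAddCommGroup E] [InnerProductSpace ℝ E]
variable {μ : ℝ} {a A H : ℕ → ℝ} {g : E → E} {x y z : ℕ → E}

theorem inner_g_x_succ_sub_y (h : IsGMD μ a A H g x y z) {κ : ℝ} (hμ : μ ≠ 0) {m : ℕ}
    (hH : H (m + 1) ≠ 0) (hκ : (a (m + 1) / A (m + 1)) ^ 2 * H (m + 1) / μ = κ) :
    ⟪g (x (m + 1)), x (m + 1) - y m⟫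
      = κ / 2 * ‖g (x (m + 1))‖ ^ 2
        + (gmdMemory μ a z m - gmdMemory μ a z (m + 1)) / (A m * H (m + 1)) := by
  have hpol := two_mul_sum_mul_inner_sub_sub (range (m + 1)) a (z m) (z (m + 1)) z
  rw [← h.A_eq_sum, sum_range_succ_mul_norm_sub_sq_eq_gmdMemory hμ,
    sum_mul_norm_sub_sq_eq_gmdMemory hμ, h.z_sub_z_succ, norm_smul, Real.norm_eq_abs, mul_pow,
    sq_abs] at hpol
  simp only [real_inner_smul_left, ← mul_sum, mul_left_comm (a _)] at hpol
  rw [h.x_succ_sub_y hμ, real_inner_smul_right, inner_sum, ← hκ]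
  simp only [real_inner_smul_right]
  have hA := (h.A_pos m).ne'
  field_simp
  linear_combination hpol

theorem norm_x_succ_sub_y_sq_le (h : IsGMD μ a A H g x y z) {κ : ℝ} (hμ : μ ≠ 0)
    (ha : ∀ j, 0 ≤ a j) {m : ℕ}
    (hH : H (m + 1) ≠ 0) (hκ : (a (m + 1) / A (m + 1)) ^ 2 * H (m + 1) / μ = κ) :
    ‖x (m + 1) - y m‖ ^ 2 ≤ 2 * κ * (gmdMemory μ a z m / (A m * H (m + 1))) := by
  have hcs := norm_sum_smul_sq_le (range (m + 1)) (fun j => z m - z j) (fun j _ => ha j)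
  rw [← h.A_eq_sum, sum_range_succ_mul_norm_sub_sq_eq_gmdMemory hμ] at hcs
  rw [h.x_succ_sub_y hμ, norm_smul, mul_pow, Real.norm_eq_abs, sq_abs, ← hκ]
  have hA := (h.A_pos m).ne'
  calc _ ≤ (a (m + 1) / A (m + 1) / (μ * A m)) ^ 2 * (A m * (2 * μ * gmdMemory μ a z m)) := by
        gcongr
    _ = _ := by field_simp

theorem step_le [CompleteSpace E] (h : IsGMD μ a A H g x y z) {f : E → ℝ} {L εH c : ℝ}
    (hdiff : ∀ p, HasGradientAt f (g p) p) (hsmooth : ∀ p q, ‖g p - g q‖ ≤ L * ‖p - q‖)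
    (hweak : ∀ p q, f q ≥ f p + ⟪g p, q - p⟫ - εH / 2 * ‖q - p‖ ^ 2) (hεH : 0 ≤ εH)
    (hμ : μ ≠ 0) (ha : ∀ j, 0 ≤ a j) {m : ℕ} (hH : H (m + 1) ≠ 0)
    (hκ : (a (m + 1) / A (m + 1)) ^ 2 * H (m + 1) / μ = c / L) :
    f (y (m + 1)) + c * (1 - c) / (2 * L) * ‖g (x (m + 1))‖ ^ 2
        + gmdMemory μ a z (m + 1) / (A m * H (m + 1))
      ≤ f (y m) + (1 + c * εH / L) * (gmdMemory μ a z m / (A m * H (m + 1))) := by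
  have hdesc := le_add_inner_add_of_lipschitz_gradient hdiff hsmooth (x (m + 1)) (y (m + 1))
  have hyx : y (m + 1) - x (m + 1) = -((c / L) • g (x (m + 1))) := by
    rw [h.y_succ_eq hκ, sub_sub_cancel_left]
  rw [hyx, inner_neg_right, real_inner_smul_right,
    real_inner_self_eq_norm_sq, norm_neg, norm_smul, mul_pow, Real.norm_eq_abs, sq_abs] at hdesc
  have hconv := hweak (x (m + 1)) (y m)
  rw [← neg_sub (x (m + 1)), inner_neg_right, norm_neg] at hconv
  have hdist := mul_le_mul_of_nonneg_left (h.norm_x_succ_sub_y_sq_le hμ ha hH hκ)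
    (by positivity : 0 ≤ εH / 2)
  have hquad : L / 2 * (c / L) ^ 2 = c ^ 2 / (2 * L) := by field_simp
  linear_combination hdesc + hconv + hdist + h.inner_g_x_succ_sub_y hμ hH hκ
    + ‖g (x (m + 1))‖ ^ 2 * hquad

end IsGMD

theorem stmt_17_general {E : Type*} [NormedAddCommGroup E] [InnerProductSpace ℝ E]
    [FiniteDimensional ℝ E]
    (μ L εH c c' : ℝ) (hμ : 0 < μ) (hL : 0 < L)
    (hεH : εH ∈ Set.Icc (0 : ℝ) L)
    (f : E → ℝ) (g : E → E) (hdiff : ∀ p, HasGradientAt f (g p) p)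
    (hfsmooth : ∀ p q, ‖g p - g q‖ ≤ L * ‖p - q‖)
    (hfweak : ∀ p q, f q ≥ f p + (inner ℝ (g p) (q - p) : ℝ) - εH / 2 * ‖q - p‖ ^ 2)
    (xstar : E) (hmin : ∀ u, f xstar ≤ f u)
    (a b A B H : ℕ → ℝ)
    (hapos : ∀ i, 0 < a i) (hbpos : ∀ i, 0 < b i)
    (hApos : ∀ i, 0 < A i) (hHpos : ∀ i, 0 < H i)
    (hA : ∀ i, A i = ∑ j ∈ Finset.range (i + 1), a j)
    (hB : ∀ i, B i = ∑ j ∈ Finset.range (i + 1), b j)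
    (hBH : ∀ i ≥ 1, B (i - 1) = A (i - 1) * H i)
    (hstep : ∀ i ≥ 1, (a i / A i) ^ 2 = c * μ / (L * H i))
    (x y : ℕ → E) (z : ℕ → E)
    (hx0 : x 0 = (μ⁻¹) • z 0) (hy0 : y 0 = (μ⁻¹) • z 0)
    (hx : ∀ i ≥ 1, x i = (A (i - 1) / A i) • y (i - 1) + (a i / A i) • ((μ⁻¹) • z (i - 1)))
    (hz : ∀ i ≥ 1, z i = z (i - 1) - ((a i / A i) * H i) • g (x i))
    (hy : ∀ i ≥ 1, y i = x i + ((a i / A i) * μ⁻¹) • (z i - z (i - 1)))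
    (k : ℕ)
    (hcond : ∀ i, 1 ≤ i → i ≤ k →
      (1 - c') * (1 / B (i - 1) - 1 / B i) ≥ (c * εH / L) * (1 / B i - 1 / B k)) :
    c' * ∑ i ∈ Finset.Icc 1 k,
        (1 / B (i - 1) - 1 / B i) *
          ∑ j ∈ Finset.range i, a j * (‖z i - z j‖ ^ 2 / (2 * μ))
      + (c * (1 - c) / (2 * L)) *
        ∑ i ∈ Finset.Icc 1 k, (1 - B (i - 1) / B k) * ‖g (x i)‖ ^ 2
      ≤ f (x 0) - f xstar := by
  have hGMD : IsGMD μ a A H g x y z := ⟨hA, hApos, hy0, hx, hz, hy⟩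
  have hBpos : ∀ n, 0 < B n := fun n => by
    rw [hB]
    exact sum_pos (fun j _ => hbpos j) nonempty_range_add_one
  have hBmono : Monotone B := monotone_nat_of_le_succ fun n => by
    rw [hB, hB, sum_range_succ _ (n + 1)]
    linarith [hbpos (n + 1)]
  have hstep_le : ∀ m < k, f (y (m + 1)) - f xstar + c * (1 - c) / (2 * L) * ‖g (x (m + 1))‖ ^ 2
      + gmdMemory μ a z (m + 1) / B m
      ≤ f (y m) - f xstar + (1 + c * εH / L) * (gmdMemory μ a z m / B m) := by
    intro m _
    have hκ : (a (m + 1) / A (m + 1)) ^ 2 * H (m + 1) / μ = c / L := by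
      rw [hstep (m + 1) (by omega)]
      field_simp [(hHpos (m + 1)).ne']
    have hBm : B m = A m * H (m + 1) := by simpa using hBH (m + 1) (by omega)
    rw [hBm]
    linarith [hGMD.step_le hdiff hfsmooth hfweak hεH.1 hμ.ne' (fun j => (hapos j).le)
      (hHpos (m + 1)).ne' hκ]
  have hmain := weighted_telescoping
    (G := fun n => c * (1 - c) / (2 * L) * ‖g (x n)‖ ^ 2) (fun n => sub_nonneg.2 (hmin (y n)))
    (gmdMemory_nonneg hμ fun j => (hapos j).le) gmdMemory_zero hBpos hBmono hstep_le hcond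
  rw [hy0, ← hx0] at hmain
  unfold gmdMemory at hmain
  convert hmain using 2
  rw [mul_sum]
  exact sum_congr rfl fun i _ => mul_left_comm (c * (1 - c) / (2 * L)) _ _

/-- Final convergence bound for GMD in a Euclidean space with `ψ(x) = (μ/2)‖x‖²` (so
`∇ψ*(z) = z/μ` and `D_{ψ*}(w, z) = ‖w - z‖²/(2μ)`): if `(a_i/A_i)² = cμ/(L H_i)`,
`B_{i-1} = A_{i-1} H_i`, and `(1-c')(1/B_{i-1} - 1/B_i) ≥ (cε_H/L)(1/B_i - 1/B_k)` holds
for all `1 ≤ i ≤ k` with `c, c' ∈ [0,1]`, then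
`c' Σ_{i=1}^k (1/B_{i-1} - 1/B_i) Σ_{j=0}^{i-1} a_j D_{ψ*}(z_i, z_j)
  + (c(1-c)/(2L)) Σ_{i=1}^k (1 - B_{i-1}/B_k)‖∇f(x_i)‖² ≤ f(x₀) - f(x*)`. -/
theorem stmt_17 {E : Type*} [NormedAddCommGroup E] [InnerProductSpace ℝ E]
    [FiniteDimensional ℝ E]
    (μ L εH c c' : ℝ) (hμ : 0 < μ) (hL : 0 < L)
    (hεH : εH ∈ Set.Icc (0 : ℝ) L)
    (hc : c ∈ Set.Icc (0 : ℝ) 1) (hc' : c' ∈ Set.Icc (0 : ℝ) 1)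
    (f : E → ℝ) (g : E → E) (hdiff : ∀ p, HasGradientAt f (g p) p)
    (hfsmooth : ∀ p q, ‖g p - g q‖ ≤ L * ‖p - q‖)
    (hfweak : ∀ p q, f q ≥ f p + (inner ℝ (g p) (q - p) : ℝ) - εH / 2 * ‖q - p‖ ^ 2)
    (xstar : E) (hmin : ∀ u, f xstar ≤ f u)
    (a b A B H : ℕ → ℝ)
    (hapos : ∀ i, 0 < a i) (hbpos : ∀ i, 0 < b i)
    (hApos : ∀ i, 0 < A i) (hHpos : ∀ i, 0 < H i)
    (hA : ∀ i, A i = ∑ j ∈ Finset.range (i + 1), a j)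
    (hB : ∀ i, B i = ∑ j ∈ Finset.range (i + 1), b j)
    (hBH : ∀ i ≥ 1, B (i - 1) = A (i - 1) * H i)
    (hstep : ∀ i ≥ 1, (a i / A i) ^ 2 = c * μ / (L * H i))
    (x y : ℕ → E) (z : ℕ → E)
    (hx0 : x 0 = (μ⁻¹) • z 0) (hy0 : y 0 = (μ⁻¹) • z 0)
    (hx : ∀ i ≥ 1, x i = (A (i - 1) / A i) • y (i - 1) + (a i / A i) • ((μ⁻¹) • z (i - 1)))
    (hz : ∀ i ≥ 1, z i = z (i - 1) - ((a i / A i) * H i) • g (x i))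
    (hy : ∀ i ≥ 1, y i = x i + ((a i / A i) * μ⁻¹) • (z i - z (i - 1)))
    (k : ℕ) (hk : 1 ≤ k)
    (hcond : ∀ i, 1 ≤ i → i ≤ k →
      (1 - c') * (1 / B (i - 1) - 1 / B i) ≥ (c * εH / L) * (1 / B i - 1 / B k)) :
    c' * ∑ i ∈ Finset.Icc 1 k,
        (1 / B (i - 1) - 1 / B i) *
          ∑ j ∈ Finset.range i, a j * (‖z i - z j‖ ^ 2 / (2 * μ))
      + (c * (1 - c) / (2 * L)) *
        ∑ i ∈ Finset.Icc 1 k, (1 - B (i - 1) / B k) * ‖g (x i)‖ ^ 2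
      ≤ f (x 0) - f xstar :=
  stmt_17_general μ L εH c c' hμ hL hεH f g hdiff hfsmooth hfweak xstar hmin a b A B H hapos hbpos
    hApos hHpos hA hB hBH hstep x y z hx0 hy0 hx hz hy k hcond
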